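/- arXiv:2004.05889 — 7 statements merged into one kernel-verified Lean document; each statement's English description precedes it below -/
import Mathlib

section
/- Let R be a ring with unity and r ≥ 2 an integer. Then every Jordan left centralizer T : M_r(R) → M_r(R), i.e., every additive map satisfying T(x²) = T(x)x for all x ∈ M_r(R), is a left centralizer: T(xy) = T(x)y for all x, y ∈ M_r(R). -/
theorem jordan_left_centralizer_is_left_centralizer_matrix {R : Type*} [Ring R]
    (r : ℕ) (hr : 2 ≤ r)
    (T : Matrix (Fin r) (Fin r) R → Matrix (Fin r) (Fin r) R)
    (hadd : ∀ x y, T (x + y) = T x + T y)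
    (hJ : ∀ x, T (x ^ 2) = T x * x) :
    ∀ x y, T (x * y) = T x * y := by
  have key : ∀ x y, T (x * y + y * x) = T x * y + T y * x := by
    intro x y
    have h := hJ (x + y)
    have e : (x + y) ^ 2 = x ^ 2 + (x * y + y * x) + y ^ 2 := by noncomm_ring
    rw [e, hadd, hadd, hJ, hJ] at h
    have : T (x * y + y * x) = T x * y + T y * x := by
      have h' : T x * x + T (x * y + y * x) + T y * y
          = T x * x + (T x * y + T y * x) + T y * y := by
        rw [h, hadd]; noncomm_ring
      have := add_right_cancel h'
      exact add_left_cancel this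
    exact this
  have hx : ∀ x, T x = T 1 * x := by
    intro x
    have h := key x 1
    rw [mul_one, one_mul, hadd] at h
    rw [mul_one] at h
    exact add_left_cancel h
  intro x y
  rw [hx (x * y), hx x, mul_assoc]
end

section
/- Let R be a ring with unity and r ≥ 2 an integer. Then every Jordan right centralizer T : M_r(R) → M_r(R), i.e., every additive map satisfying T(x²) = xT(x) for all x ∈ M_r(R), is a right centralizer: T(xy) = xT(y) for all x, y ∈ M_r(R). -/
theorem jordan_right_centralizer_is_right_centralizer_matrix {R : Type*} [Ring R]
    (r : ℕ) (hr : 2 ≤ r)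
    (T : Matrix (Fin r) (Fin r) R → Matrix (Fin r) (Fin r) R)
    (hadd : ∀ x y, T (x + y) = T x + T y)
    (hJ : ∀ x, T (x ^ 2) = x * T x) :
    ∀ x y, T (x * y) = x * T y := by
  have lin : ∀ x y, T (x * y + y * x) = x * T y + y * T x := by
    intro x y
    have h := hJ (x + y)
    have e1 : (x + y) ^ 2 = x ^ 2 + (x * y + y * x) + y ^ 2 := by noncomm_ring
    rw [e1] at h
    simp only [hadd, hJ, add_mul, mul_add] at h
    rw [hadd]
    linear_combination (norm := abel_nf) h
  have key : ∀ x, T x = x * T 1 := by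
    intro x
    have h := lin x 1
    rw [mul_one, one_mul, one_mul, hadd] at h
    exact add_right_cancel h
  intro x y
  rw [key (x * y), key y, mul_assoc]
end

section
/- Let R be a ring with unity and r ≥ 2 an integer. If T : M_r(R) → M_r(R) is an additive map satisfying T(x²) = T(x)x for all x ∈ M_r(R), then T(x) = T(I)·x for all x ∈ M_r(R), where I denotes the identity matrix of M_r(R). -/
theorem jordan_left_centralizer_eq_mul_T_one {R : Type*} [Ring R]
    (r : ℕ) (hr : 2 ≤ r)
    (T : Matrix (Fin r) (Fin r) R → Matrix (Fin r) (Fin r) R)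
    (hadd : ∀ x y, T (x + y) = T x + T y)
    (hJ : ∀ x, T (x ^ 2) = T x * x) :
    ∀ x, T x = T 1 * x := by
  intro x
  have h := hJ (x + 1)
  have e : (x + 1) ^ 2 = x ^ 2 + x + x + 1 := by noncomm_ring
  rw [e, hadd, hadd, hadd, hadd, hJ] at h
  have h2 : T x * x + T x + T x + T 1 = T x * x + T x + T 1 * x + T 1 := by
    rw [h]; noncomm_ring
  have h3 := add_right_cancel h2
  rw [add_assoc, add_assoc] at h3
  exact add_left_cancel (add_left_cancel h3)
end

section
/- Let R be a 2-torsion free ring with unity and r ≥ 2 an integer. If T : M_r(R) → M_r(R) is an additive mapping satisfying 2T(x²) = T(x)x + xT(x) for all x ∈ M_r(R), then there exists α in the center Z(R) of R such that T(x) = α·x for all x ∈ M_r(R); in particular, T is a two-sided centralizer. -/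
/-!
Linearizing the identity at `x + 1` gives `2 T(x) = a x + x a` with `a = T 1`, and feeding this
back into the identity gives `a x² + x² a = 2 x a x`. At an idempotent `e` this reads
`a e + e a = 2 e a e`, and multiplying by `e` on either side shows `a e = e a e = e a`.
The idempotents `E i i` and `E i i + c • E i j` of `M_r(R)` generate it additively and
multiplicatively once `r ≥ 2`, so `a` is central, hence a central scalar `α`, and 2-torsion
freeness turns `2 T(x) = 2 a x` into `T(x) = α x`.
-/

open Matrix

section Vukman

variable {S : Type*} [Ring S]

theorem two_nsmul_map_eq_of_vukman (T : S →+ S) (h : ∀ x, 2 • T (x ^ 2) = T x * x + x * T x)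
    (x : S) : 2 • T x = T 1 * x + x * T 1 := by
  have hx1 := h (x + 1)
  rw [show (x + 1) ^ 2 = x ^ 2 + x + x + 1 by noncomm_ring, map_add, map_add, map_add, map_add,
    smul_add, smul_add, smul_add, h x, two_nsmul (T 1)] at hx1
  rw [← sub_eq_zero, ← sub_eq_zero.mpr hx1]
  noncomm_ring

theorem map_one_mul_sq_add_sq_mul_of_vukman (T : S →+ S)
    (h : ∀ x, 2 • T (x ^ 2) = T x * x + x * T x) (x : S) :
    T 1 * x ^ 2 + x ^ 2 * T 1 = 2 • (x * T 1 * x) := by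
  have hsq : T 1 * x ^ 2 + x ^ 2 * T 1 = T x * x + x * T x :=
    (two_nsmul_map_eq_of_vukman T h (x ^ 2)).symm.trans (h x)
  have hx := two_nsmul_map_eq_of_vukman T h x
  have key : 2 • (T 1 * x ^ 2 + x ^ 2 * T 1)
      = (T 1 * x ^ 2 + x ^ 2 * T 1) + 2 • (x * T 1 * x) := by
    calc 2 • (T 1 * x ^ 2 + x ^ 2 * T 1) = (2 • T x) * x + x * (2 • T x) := by
          rw [hsq, smul_add, smul_mul_assoc, mul_smul_comm]
      _ = _ := by rw [hx]; noncomm_ring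
  rwa [two_nsmul, add_right_inj] at key

theorem commute_of_mul_add_mul_eq_two_nsmul {a e : S} (he : IsIdempotentElem e)
    (h : a * e + e * a = 2 • (e * a * e)) : Commute a e := by
  have left : e * a = e * a * e := by
    have := congrArg (e * ·) h
    simp only [mul_add, ← mul_assoc, he.eq, two_nsmul] at this
    exact add_left_cancel this
  have right : a * e = e * a * e := by
    have := congrArg (· * e) h
    simp only [add_mul, mul_assoc, he.eq, two_nsmul] at this
    rw [← mul_assoc] at this
    exact add_right_cancel this
  exact right.trans left.symm

theorem map_eq_map_one_mul_of_vukman (htf : ∀ a : S, 2 • a = 0 → a = 0) (T : S →+ S)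
    (h : ∀ x, 2 • T (x ^ 2) = T x * x + x * T x) (hT1 : T 1 ∈ Set.center S) (x : S) :
    T x = T 1 * x := by
  have h2 : 2 • (T x - T 1 * x) = 0 := by
    rw [smul_sub, two_nsmul_map_eq_of_vukman T h, ← (Semigroup.mem_center_iff.mp hT1 x),
      two_nsmul, sub_self]
  exact sub_eq_zero.mp (htf _ h2)

end Vukman

namespace Matrix

theorem eq_zero_of_two_nsmul_eq_zero {m n R : Type*} [Ring R]
    (htf : ∀ a : R, 2 • a = 0 → a = 0) {M : Matrix m n R} (hM : 2 • M = 0) : M = 0 := by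
  ext i j
  exact htf _ (congrFun₂ hM i j)

variable {n R : Type*} [Fintype n] [DecidableEq n] [Ring R]

theorem isIdempotentElem_single_add_single {i j : n} (hij : i ≠ j) (c : R) :
    IsIdempotentElem (single i i 1 + single i j c) := by
  simp [IsIdempotentElem, add_mul, mul_add, single_mul_single_same,
    single_mul_single_of_ne _ _ _ _ (Ne.symm hij)]

theorem mem_center_of_forall_isIdempotentElem_commute [Nontrivial n] {a : Matrix n n R}
    (ha : ∀ e, IsIdempotentElem e → Commute a e) : a ∈ Set.center (Matrix n n R) := by
  have hoff : ∀ i j, i ≠ j → ∀ c : R, Commute a (single i j c) := fun i j hij c => by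
    simpa using (ha _ (isIdempotentElem_single_add_single hij c)).sub_right
      (ha (single i i 1) (by simp [IsIdempotentElem, single_mul_single_same]))
  have hsingle : ∀ i j (c : R), Commute a (single i j c) := fun i j c => by
    obtain ⟨k, hki⟩ := exists_ne i
    rcases eq_or_ne i j with rfl | hij
    · simpa [single_mul_single_same] using (hoff i k hki.symm c).mul_right (hoff k i hki 1)
    · exact hoff i j hij c
  refine Semigroup.mem_center_iff.mpr fun x => ?_
  rw [matrix_eq_sum_single x]
  exact (Commute.sum_right _ _ _ fun i _ => Commute.sum_right _ _ _ fun j _ =>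
    hsingle i j (x i j)).symm.eq

end Matrix

theorem vukman_identity_matrix {R : Type*} [Ring R]
    (htf : ∀ a : R, 2 • a = 0 → a = 0)
    (r : ℕ) (hr : 2 ≤ r)
    (T : Matrix (Fin r) (Fin r) R → Matrix (Fin r) (Fin r) R)
    (hadd : ∀ x y, T (x + y) = T x + T y)
    (h : ∀ x, 2 • T (x ^ 2) = T x * x + x * T x) :
    (∃ α ∈ Subring.center R, ∀ x, T x = α • x) ∧
      ∀ x y, T (x * y) = T x * y ∧ T (x * y) = x * T y := by
  have : Nontrivial (Fin r) := Fin.nontrivial_iff_two_le.mpr hr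
  let T' := AddMonoidHom.mk' T hadd
  have hcenter : T 1 ∈ Set.center (Matrix (Fin r) (Fin r) R) :=
    mem_center_of_forall_isIdempotentElem_commute fun e he =>
      commute_of_mul_add_mul_eq_two_nsmul he <| by
        have hJ := map_one_mul_sq_add_sq_mul_of_vukman T' h e
        rwa [sq, he.eq] at hJ
  have hT : ∀ x, T x = T 1 * x :=
    map_eq_map_one_mul_of_vukman (fun _ => eq_zero_of_two_nsmul_eq_zero htf) T' h hcenter
  obtain ⟨α, hα, hα1⟩ : T 1 ∈ (scalar (Fin r) : R →+* _) '' Set.center R :=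
    center_eq_scalar_image (n := Fin r) (α := R) ▸ hcenter
  refine ⟨⟨α, hα, fun x => by rw [hT, ← hα1, scalar_apply, smul_eq_diagonal_mul]⟩,
    fun x y => ?_⟩
  rw [hT (x * y), hT x, hT y, ← mul_assoc, ← mul_assoc, Semigroup.mem_center_iff.mp hcenter x]
  exact ⟨rfl, rfl⟩
end

section
/- Let R be a 2-torsion free ring with unity and r ≥ 2 an integer. If T : M_r(R) → M_r(R) is an additive mapping satisfying 2T(xyx) = T(x)yx + xyT(x) for all x, y ∈ M_r(R), then there exists α in the center Z(R) of R such that T(x) = α·x for all x ∈ M_r(R); in particular, T is a two-sided centralizer. -/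
/-!
Put `a = T 1`. Taking `x = 1` gives `2 T(y) = a y + y a`; feeding this back into the hypothesis
and comparing both sides of `4 T(xyx)` yields `[a, x] y x = x y [a, x]` for all `x, y`, with no
division by `2`. In `M_r(R)` this identity, tested on matrix units, forces `a` to be diagonal,
then (using 2-torsion freeness) scalar, and, since `r ≥ 2`, its diagonal entry to be central.
Then `2 T(x) = 2 a x`, and cancelling `2` gives `T(x) = a x`.
-/

def IsXYXCentralizer {S : Type*} [Ring S] (T : S → S) : Prop :=
  ∀ x y, 2 • T (x * y * x) = T x * y * x + x * y * T x

namespace IsXYXCentralizer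

variable {S : Type*} [Ring S] {T : S → S} (h : IsXYXCentralizer T)
include h

theorem two_nsmul_apply (y : S) : 2 • T y = T 1 * y + y * T 1 := by
  simpa using h 1 y

theorem commutator_mul_mul_eq (x y : S) :
    (T 1 * x - x * T 1) * y * x = x * y * (T 1 * x - x * T 1) := by
  set a := T 1
  have e : 2 • (a * (x * y * x) + x * y * x * a) =
      (a * x + x * a) * y * x + x * y * (a * x + x * a) := by
    rw [← h.two_nsmul_apply, ← h.two_nsmul_apply, h, smul_add, smul_mul_assoc, smul_mul_assoc,
      mul_smul_comm]
  rw [← sub_eq_zero, ← sub_eq_zero_of_eq e]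
  noncomm_ring

end IsXYXCentralizer

namespace Matrix

theorem two_nsmul_injective {m n α : Type*} [AddCommGroup α]
    (htf : ∀ b : α, 2 • b = 0 → b = 0) :
    Function.Injective fun M : Matrix m n α ↦ 2 • M := by
  intro M N hMN
  ext i j
  refine sub_eq_zero.mp (htf _ ?_)
  simpa [smul_sub, sub_eq_zero] using congrFun₂ hMN i j

variable {n R : Type*} [Fintype n] [DecidableEq n] [Ring R]

section CommutatorIdentity

variable {a : Matrix n n R} (ha : ∀ x y, (a * x - x * a) * y * x = x * y * (a * x - x * a))
include ha

theorem apply_eq_zero_of_commutator_mul_mul_eq {i k : n} (hik : i ≠ k) : a i k = 0 := by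
  simpa [mul_apply, single, hik, hik.symm] using
    congrFun₂ (ha (single k i 1) (single i k 1)) i i

theorem diag_eq_of_commutator_mul_mul_eq (htf : ∀ b : R, 2 • b = 0 → b = 0) {k l : n}
    (hkl : k ≠ l) : a k k = a l l := by
  have e : a k k - a l l = a l l - a k k := by
    have := congrFun₂ (ha (single k l 1 + single l k 1) (single l l 1)) k k
    simpa [mul_apply, single, hkl, hkl.symm, add_mul, mul_add, sub_mul, mul_sub, ite_and] using this
  have h2 : 2 • (a k k - a l l) = 0 := by
    rw [two_nsmul]
    nth_rw 2 [e]
    abel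
  exact sub_eq_zero.mp (htf _ h2)

theorem eq_scalar_of_commutator_mul_mul_eq (htf : ∀ b : R, 2 • b = 0 → b = 0) (k : n) :
    a = scalar n (a k k) := by
  ext i j
  rcases eq_or_ne i j with rfl | hij
  · rcases eq_or_ne i k with rfl | hik
    · simp
    · simpa using diag_eq_of_commutator_mul_mul_eq ha htf hik
  · simpa [hij] using apply_eq_zero_of_commutator_mul_mul_eq ha hij

end CommutatorIdentity

theorem commute_of_commutator_scalar_mul_mul_eq {c : R}
    (hc : ∀ x y : Matrix n n R,
      (scalar n c * x - x * scalar n c) * y * x = x * y * (scalar n c * x - x * scalar n c))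
    {k l : n} (hkl : k ≠ l) (b : R) : Commute c b := by
  have := congrFun₂ (hc (single k k b + single k l 1) (single k k 1)) k l
  simpa [diagonal_apply, mul_apply, single, hkl, hkl.symm, add_mul, mul_add, sub_mul, mul_sub,
    ite_and, sub_eq_zero, commute_iff_eq] using this

theorem exists_mem_center_eq_scalar_of_commutator_mul_mul_eq [Nontrivial n]
    (htf : ∀ b : R, 2 • b = 0 → b = 0) {a : Matrix n n R}
    (ha : ∀ x y, (a * x - x * a) * y * x = x * y * (a * x - x * a)) :
    ∃ c ∈ Subring.center R, a = scalar n c := by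
  obtain ⟨k, l, hkl⟩ := exists_pair_ne n
  have hscalar := eq_scalar_of_commutator_mul_mul_eq ha htf k
  rw [hscalar] at ha
  exact ⟨a k k, Subring.mem_center_iff.mpr fun b ↦
    (commute_of_commutator_scalar_mul_mul_eq ha hkl b).symm, hscalar⟩

end Matrix

open Matrix in
theorem centralizer_xyx_outer_matrix_general {R : Type*} [Ring R]
    (htf : ∀ a : R, 2 • a = 0 → a = 0)
    (r : ℕ) (hr : 2 ≤ r)
    (T : Matrix (Fin r) (Fin r) R → Matrix (Fin r) (Fin r) R)
    (h : ∀ x y, 2 • T (x * y * x) = T x * y * x + x * y * T x) :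
    (∃ α ∈ Subring.center R, ∀ x, T x = α • x) ∧
      ∀ x y, T (x * y) = T x * y ∧ T (x * y) = x * T y := by
  have : Nontrivial (Fin r) := Fin.nontrivial_iff_two_le.mpr hr
  obtain ⟨c, hc, ha⟩ := exists_mem_center_eq_scalar_of_commutator_mul_mul_eq htf
    (IsXYXCentralizer.commutator_mul_mul_eq h)
  have hcomm (x : Matrix (Fin r) (Fin r) R) : Commute (scalar (Fin r) c) x :=
    scalar_commute c (fun b ↦ (Subring.mem_center_iff.mp hc b).symm) x
  have hT (x : Matrix (Fin r) (Fin r) R) : T x = scalar (Fin r) c * x :=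
    two_nsmul_injective htf <| by
      simp only [IsXYXCentralizer.two_nsmul_apply h x, ha, (hcomm x).eq, two_nsmul]
  refine ⟨⟨c, hc, fun x ↦ by rw [hT, smul_eq_diagonal_mul, scalar_apply]⟩,
    fun x y ↦ ⟨?_, ?_⟩⟩
  · rw [hT, hT, mul_assoc]
  · rw [hT, hT, ← mul_assoc, (hcomm x).eq, mul_assoc]

theorem centralizer_xyx_outer_matrix {R : Type*} [Ring R]
    (htf : ∀ a : R, 2 • a = 0 → a = 0)
    (r : ℕ) (hr : 2 ≤ r)
    (T : Matrix (Fin r) (Fin r) R → Matrix (Fin r) (Fin r) R)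
    (hadd : ∀ x y, T (x + y) = T x + T y)
    (h : ∀ x y, 2 • T (x * y * x) = T x * y * x + x * y * T x) :
    (∃ α ∈ Subring.center R, ∀ x, T x = α • x) ∧
      ∀ x y, T (x * y) = T x * y ∧ T (x * y) = x * T y :=
  centralizer_xyx_outer_matrix_general htf r hr T h
end

section
/- Let R be a 2-torsion free ring with unity and r ≥ 2 an integer. If T : M_r(R) → M_r(R) is an additive mapping satisfying 3T(xyx) = T(x)yx + xT(y)x + xyT(x) for all x, y ∈ M_r(R), then there exists α in the center Z(R) of R such that T(x) = α·x for all x ∈ M_r(R); in particular, T is a two-sided centralizer. -/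
/-!
Putting `x = 1` gives `2 T(y) = a y + y a` with `a = T 1`; feeding this back into the identity and
cancelling `2` turns it into `⁅a, x⁆ y x = x y ⁅a, x⁆`, and replacing `x` by `x + 1` shows that every
commutator `⁅a, x⁆` is central, i.e. a scalar matrix. For a matrix unit `E = E_ij` (`i ≠ j`) we have
`E² = 0`, so `0 = ⁅a, E²⁆ = 2 ⁅a, E⁆ E` forces `⁅a, E⁆ = 0`; then the scalar matrix
`⁅a, x E⁆ = ⁅a, x⁆ E` has off-diagonal `(i, j)` entry equal to the scalar of `⁅a, x⁆`, so `⁅a, x⁆ = 0`.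
Thus `a` is central, `T(y) = a y`, and the center of `M_r(R)` consists of the scalars `α ∈ Z(R)`.
-/

theorem lie_mul_eq_lie_mul_add_mul_lie {S : Type*} [Ring S] (a x y : S) :
    ⁅a, x * y⁆ = ⁅a, x⁆ * y + x * ⁅a, y⁆ := by
  simp only [Ring.lie_def]
  noncomm_ring

section ThreeXYX

variable {S : Type*} [Ring S] {T : S → S}
  (h : ∀ x y, 3 • T (x * y * x) = T x * y * x + x * T y * x + x * y * T x)
include h

theorem two_nsmul_eq_mul_add_mul_of_xyx (y : S) : 2 • T y = T 1 * y + y * T 1 := by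
  have h1 := h 1 y
  simp only [one_mul, mul_one] at h1
  rw [show (3 : ℕ) = 2 + 1 from rfl, add_smul, one_smul] at h1
  exact add_right_cancel (h1.trans (add_right_comm _ _ _))

theorem lie_mul_mul_eq_of_xyx (htf : ∀ a : S, 2 • a = 0 → a = 0) (x y : S) :
    ⁅T 1, x⁆ * y * x = x * y * ⁅T 1, x⁆ := by
  have hB := two_nsmul_eq_mul_add_mul_of_xyx h
  -- compute `6 • T (x * y * x)` as `3 • (2 • _)` and as `2 • (3 • _)`
  have h6 : 3 • (T 1 * (x * y * x) + x * y * x * T 1) =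
      (2 • T x) * y * x + x * (2 • T y) * x + x * y * (2 • T x) := by
    rw [← hB, smul_smul, show (3 : ℕ) * 2 = 2 * 3 from rfl, ← smul_smul, h x y]
    noncomm_ring
  rw [hB x, hB y] at h6
  refine sub_eq_zero.mp (htf _ ?_)
  rw [Ring.lie_def]
  calc 2 • ((T 1 * x - x * T 1) * y * x - x * y * (T 1 * x - x * T 1))
      = 3 • (T 1 * (x * y * x) + x * y * x * T 1) - ((T 1 * x + x * T 1) * y * x
          + x * (T 1 * y + y * T 1) * x + x * y * (T 1 * x + x * T 1)) := by noncomm_ring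
    _ = 0 := by rw [h6, sub_self]

end ThreeXYX

theorem lie_mem_center_of_lie_mul_mul_eq {S : Type*} [Ring S] {a : S}
    (h : ∀ x y : S, ⁅a, x⁆ * y * x = x * y * ⁅a, x⁆) (x : S) : ⁅a, x⁆ ∈ Set.center S := by
  refine Semigroup.mem_center_iff.mpr fun y => ?_
  have hx1 := h (x + 1) y
  have hx := h x y
  have hlie : ⁅a, x + 1⁆ = ⁅a, x⁆ := by
    simp only [Ring.lie_def]
    noncomm_ring
  rw [hlie] at hx1
  have : ⁅a, x⁆ * y - y * ⁅a, x⁆ = 0 := by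
    calc ⁅a, x⁆ * y - y * ⁅a, x⁆
        = (⁅a, x⁆ * y * (x + 1) - (x + 1) * y * ⁅a, x⁆) - (⁅a, x⁆ * y * x - x * y * ⁅a, x⁆) := by
          noncomm_ring
      _ = 0 := by rw [hx1, hx, sub_self, sub_self, sub_zero]
  exact (sub_eq_zero.mp this).symm

namespace Matrix

variable {n R : Type*} [Fintype n] [DecidableEq n] [Ring R]

theorem exists_scalar_eq_of_mem_center {a : Matrix n n R} (ha : a ∈ Set.center (Matrix n n R)) :
    ∃ α ∈ Set.center R, scalar n α = a := by
  rwa [center_eq_scalar_image] at ha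

theorem mem_center_of_lie_mem_center (htf : ∀ c : R, 2 • c = 0 → c = 0) {i j : n} (hij : i ≠ j)
    {a : Matrix n n R} (ha : ∀ x, ⁅a, x⁆ ∈ Set.center (Matrix n n R)) :
    a ∈ Set.center (Matrix n n R) := by
  set E : Matrix n n R := single i j 1
  have hE : ⁅a, E⁆ = 0 := by
    obtain ⟨γ, -, hγ⟩ := exists_scalar_eq_of_mem_center (ha E)
    have hsq : 2 • (⁅a, E⁆ * E) = 0 := calc
      2 • (⁅a, E⁆ * E) = ⁅a, E⁆ * E + E * ⁅a, E⁆ := by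
        rw [two_nsmul, Semigroup.mem_center_iff.mp (ha E) E]
      _ = ⁅a, E * E⁆ := (lie_mul_eq_lie_mul_add_mul_lie a E E).symm
      _ = 0 := by rw [show E * E = 0 by simp [E, hij.symm], (Commute.zero_right a).lie_eq]
    have hγ0 : 2 • γ = 0 := by
      simpa [← hγ, E] using congr_fun₂ hsq i j
    rw [← hγ, htf γ hγ0, map_zero]
  refine Semigroup.mem_center_iff.mpr fun x => (commute_iff_lie_eq.mpr ?_).symm
  obtain ⟨α, -, hα⟩ := exists_scalar_eq_of_mem_center (ha x)
  obtain ⟨β, -, hβ⟩ := exists_scalar_eq_of_mem_center (ha (x * E))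
  have hxE : scalar n β = scalar n α * E := by
    rw [hβ, hα, lie_mul_eq_lie_mul_add_mul_lie, hE, mul_zero, add_zero]
  have hα0 : α = 0 := by
    simpa [scalar_apply, diagonal_apply_ne _ hij, E] using (congr_fun₂ hxE i j).symm
  rw [← hα, hα0, map_zero]

end Matrix

theorem centralizer_xyx_three_matrix_general {R : Type*} [Ring R]
    (htf : ∀ a : R, 2 • a = 0 → a = 0)
    (r : ℕ) (hr : 2 ≤ r)
    (T : Matrix (Fin r) (Fin r) R → Matrix (Fin r) (Fin r) R)
    (h : ∀ x y, 3 • T (x * y * x) = T x * y * x + x * T y * x + x * y * T x) :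
    (∃ α ∈ Subring.center R, ∀ x, T x = α • x) ∧
      ∀ x y, T (x * y) = T x * y ∧ T (x * y) = x * T y := by
  have htfM : ∀ M : Matrix (Fin r) (Fin r) R, 2 • M = 0 → M = 0 := fun M hM =>
    Matrix.ext fun i j => htf _ (by simpa using congr_fun₂ hM i j)
  have hcentral : T 1 ∈ Set.center (Matrix (Fin r) (Fin r) R) :=
    Matrix.mem_center_of_lie_mem_center htf (i := ⟨0, by omega⟩) (j := ⟨1, hr⟩)
      (Fin.ne_of_val_ne zero_ne_one)
      (lie_mem_center_of_lie_mul_mul_eq (lie_mul_mul_eq_of_xyx h htfM))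
  have hcomm (x) : x * T 1 = T 1 * x := Semigroup.mem_center_iff.mp hcentral x
  have hT (x) : T x = T 1 * x := sub_eq_zero.mp <| htfM _ <| by
    rw [smul_sub, two_nsmul_eq_mul_add_mul_of_xyx h, hcomm x, two_nsmul, sub_self]
  obtain ⟨α, hα, hαT⟩ := Matrix.exists_scalar_eq_of_mem_center hcentral
  refine ⟨⟨α, hα, fun x => ?_⟩, fun x y => ⟨?_, ?_⟩⟩
  · rw [hT, ← hαT, Matrix.scalar_apply, Matrix.smul_eq_diagonal_mul]
  · rw [hT, hT x, mul_assoc]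
  · rw [hT, hT y, ← mul_assoc, ← hcomm, mul_assoc]

theorem centralizer_xyx_three_matrix {R : Type*} [Ring R]
    (htf : ∀ a : R, 2 • a = 0 → a = 0)
    (r : ℕ) (hr : 2 ≤ r)
    (T : Matrix (Fin r) (Fin r) R → Matrix (Fin r) (Fin r) R)
    (hadd : ∀ x y, T (x + y) = T x + T y)
    (h : ∀ x y, 3 • T (x * y * x) = T x * y * x + x * T y * x + x * y * T x) :
    (∃ α ∈ Subring.center R, ∀ x, T x = α • x) ∧
      ∀ x y, T (x * y) = T x * y ∧ T (x * y) = x * T y :=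
  centralizer_xyx_three_matrix_general htf r hr T h
end

section
/- There exists an additive mapping T : M₂(ℤ₂) → M₂(ℤ₂) (namely T([[x, y], [z, t]]) = (x + y + z + t)·I, where I is the identity matrix) satisfying 2T(X²) = T(X)X + XT(X) for all X ∈ M₂(ℤ₂), but which is not a left centralizer: T(e₁₁e₁₂) ≠ T(e₁₁)e₁₂, where e_ij denotes the matrix unit with 1 in position (i, j) and 0 elsewhere. -/
/-!
In characteristic two both sides of Vukman's identity `2 T(X²) = T(X) X + X T(X)` vanish as soon
as `T(X)` commutes with `X`, so every map with scalar values satisfies it. The additive map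
`X ↦ (x + y + z + t) I` is such a map, yet it sends `e₁₁ e₁₂ = e₁₂` to `I`, while
`T(e₁₁) e₁₂ = e₁₂`.
-/

theorem CharTwo.mul_add_mul_eq_zero_of_commute {R : Type*} [Semiring R] [CharP R 2] {a x : R}
    (h : Commute a x) : a * x + x * a = 0 := by
  rw [h.eq, add_self_eq_zero]

theorem counterexample_vukman_identity_char_two :
    ∃ T : Matrix (Fin 2) (Fin 2) (ZMod 2) → Matrix (Fin 2) (Fin 2) (ZMod 2),
      (T = fun X => (X 0 0 + X 0 1 + X 1 0 + X 1 1) • (1 : Matrix (Fin 2) (Fin 2) (ZMod 2))) ∧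
      (∀ x y, T (x + y) = T x + T y) ∧
      (∀ X, 2 • T (X ^ 2) = T X * X + X * T X) ∧
      T (Matrix.single 0 0 1 * Matrix.single 0 1 1) ≠
        T (Matrix.single 0 0 1) * Matrix.single 0 1 1 := by
  refine ⟨_, rfl, fun x y => ?_, fun X => ?_, by decide⟩
  · simp only [Matrix.add_apply]
    module
  · rw [CharTwo.two_nsmul,
      CharTwo.mul_add_mul_eq_zero_of_commute ((Commute.one_left X).smul_left _)]
end
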